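/- Let H be a complex Hilbert space, let T ∈ B(H) have polar decomposition T = U|T| with U unitary, and let f : ℝ → ℝ be continuous. Let r > 0 and θ ∈ ℝ, and let (x_n) be a sequence of unit vectors in H such that (T − re^{iθ})x_n → 0 and (T − re^{iθ})^* x_n → 0 as n → ∞. Then (U − e^{iθ})x_n → 0, (|T| − r)x_n → 0, and (f(|T|) − f(r))x_n → 0 as n → ∞, where f(|T|) is defined by the continuous functional calculus. -/

import Mathlib

open ContinuousLinearMap Filter Topology

variable {H : Type*} [NormedAddCommGroup H] [InnerProductSpace ℂ H] [CompleteSpace H]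

/-- The absolute value `|T| = (T^*T)^{1/2}` of a bounded operator, via the
continuous functional calculus. -/
noncomputable def opAbs (T : H →L[ℂ] H) : H →L[ℂ] H :=
  cfc Real.sqrt (adjoint T * T)

set_option maxHeartbeats 1000000 in
theorem stmt7 (T U : H →L[ℂ] H)
    (hU : U ∈ unitary (H →L[ℂ] H)) (hpolar : T = U * opAbs T)
    (f : ℝ → ℝ) (hf : Continuous f)
    (r : ℝ) (hr : 0 < r) (θ : ℝ)
    (x : ℕ → H) (hx : ∀ n, ‖x n‖ = 1)
    (h₁ : Tendsto (fun n => (T - ((r : ℂ) * Complex.exp (θ * Complex.I)) • 1) (x n)) atTop (𝓝 0))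
    (h₂ : Tendsto (fun n => adjoint (T - ((r : ℂ) * Complex.exp (θ * Complex.I)) • 1) (x n))
      atTop (𝓝 0)) :
    Tendsto (fun n => (U - Complex.exp (θ * Complex.I) • 1) (x n)) atTop (𝓝 0) ∧
    Tendsto (fun n => (opAbs T - (r : ℂ) • 1) (x n)) atTop (𝓝 0) ∧
    Tendsto (fun n => (cfc f (opAbs T) - (f r : ℂ) • 1) (x n)) atTop (𝓝 0) := by
  have hHnt : Nontrivial H := by
    by_contra hcon
    rw [not_nontrivial_iff_subsingleton] at hcon
    have h0 := hx 0
    rw [Subsingleton.elim (x 0) 0, norm_zero] at h0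
    norm_num at h0
  set A := opAbs T with hAdef
  set Λ : ℂ := (r : ℂ) * Complex.exp (θ * Complex.I) with hΛdef
  have hrC : (r : ℂ) ≠ 0 := by exact_mod_cast hr.ne'
  -- basic facts about A
  have hTTnn : (0 : H →L[ℂ] H) ≤ adjoint T * T := by
    simpa [star_eq_adjoint] using star_mul_self_nonneg T
  have hAnn : (0 : H →L[ℂ] H) ≤ A := cfc_nonneg (fun t _ => Real.sqrt_nonneg t)
  have hAsa : IsSelfAdjoint A := hAnn.isSelfAdjoint
  have hA2 : A * A = adjoint T * T := by
    have h2 : cfc (fun x : ℝ => Real.sqrt x * Real.sqrt x) (adjoint T * T)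
        = cfc (fun x : ℝ => x) (adjoint T * T) :=
      cfc_congr (fun t ht => Real.mul_self_sqrt (spectrum_nonneg_of_nonneg hTTnn ht))
    rw [hAdef, opAbs, ← cfc_mul _ _ (adjoint T * T), h2,
      cfc_id' ℝ (adjoint T * T) hTTnn.isSelfAdjoint]
  -- |Λ|² = r²
  have hΛabs : ‖Λ‖ = r := by
    rw [hΛdef, norm_mul, Complex.norm_exp_ofReal_mul_I, Complex.norm_real, Real.norm_eq_abs, abs_of_pos hr, mul_one]
  have hdc : Λ * (starRingEnd ℂ) Λ = ((r : ℂ)) ^ 2 := by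
    rw [Complex.mul_conj, Complex.normSq_eq_norm_sq, hΛabs]
    push_cast
    ring
  -- adjoint identity
  have hadj : adjoint (T - Λ • 1) = adjoint T - ((starRingEnd ℂ) Λ) • 1 := by
    have h1 : adjoint (1 : H →L[ℂ] H) = 1 := adjoint_id
    simp [map_sub, map_smulₛₗ, h1]
  clear_value A Λ
  -- second order convergence : A(A x n) - r² x n → 0
  have hs : Tendsto (fun n => A (A (x n)) - ((r : ℂ) ^ 2) • x n) atTop (𝓝 0) := by
    have key : ∀ n, A (A (x n)) - ((r : ℂ) ^ 2) • x n
        = adjoint T ((T - Λ • 1) (x n)) + Λ • (adjoint (T - Λ • 1) (x n)) := by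
      intro n
      have hAA : A (A (x n)) = adjoint T (T (x n)) := by
        have := congrArg (fun S : H →L[ℂ] H => S (x n)) hA2
        simpa [mul_apply] using this
      rw [hadj, hAA, ← hdc]
      simp only [sub_apply, smul_apply, ContinuousLinearMap.one_apply, map_sub, map_smul, smul_sub, smul_smul]
      abel
    have t1 : Tendsto (fun n => adjoint T ((T - Λ • 1) (x n))) atTop (𝓝 0) := by
      simpa only [Function.comp_def, map_zero] using ((adjoint T).continuous.tendsto 0).comp h₁
    have t2 : Tendsto (fun n => Λ • (adjoint (T - Λ • 1) (x n))) atTop (𝓝 0) := by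
      simpa using h₂.const_smul Λ
    have hsum := t1.add t2
    rw [add_zero] at hsum
    exact hsum.congr fun n => (key n).symm
  -- first order convergence : A x n - r x n → 0
  have hbound : ∀ n, ‖A (x n) - (r : ℂ) • x n‖
      ≤ r⁻¹ * ‖A (A (x n)) - ((r : ℂ) ^ 2) • x n‖ := by
    intro n
    set y := A (x n) - (r : ℂ) • x n with hy
    have hz : A y + (r : ℂ) • y = A (A (x n)) - ((r : ℂ) ^ 2) • x n := by
      rw [hy, map_sub, map_smul]
      module
    have hpos : 0 ≤ (inner ℂ (A y) y).re := by
      exact (Complex.nonneg_iff.mp (((nonneg_iff_isPositive A).mp hAnn).inner_nonneg_left y)).1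
    have hre : (inner ℂ (A y + (r : ℂ) • y) y).re
        = (inner ℂ (A y) y).re + r * (‖y‖ * ‖y‖) := by
      rw [inner_add_left, inner_smul_left, Complex.add_re, Complex.conj_ofReal]
      congr 1
      rw [Complex.mul_re, Complex.ofReal_re, Complex.ofReal_im, zero_mul, sub_zero]
      rw [← @inner_self_eq_norm_mul_norm ℂ]
      rfl
    have hle : (inner ℂ (A y + (r : ℂ) • y) y).re ≤ ‖A y + (r : ℂ) • y‖ * ‖y‖ := by
      exact re_inner_le_norm (𝕜 := ℂ) (A y + (r : ℂ) • y) y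
    have key : r * ‖y‖ * ‖y‖ ≤ ‖A y + (r : ℂ) • y‖ * ‖y‖ := by nlinarith
    by_cases hy0 : ‖y‖ = 0
    · rw [hy0]
      positivity
    · have hy0' : 0 < ‖y‖ := lt_of_le_of_ne (norm_nonneg y) (Ne.symm hy0)
      have h5 : r * ‖y‖ ≤ ‖A y + (r : ℂ) • y‖ := le_of_mul_le_mul_right key hy0'
      rw [← hz]
      rw [le_inv_mul_iff₀ hr]
      exact h5
  have hyT : Tendsto (fun n => A (x n) - (r : ℂ) • x n) atTop (𝓝 0) := by
    rw [tendsto_zero_iff_norm_tendsto_zero]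
    refine squeeze_zero (fun n => norm_nonneg _) hbound ?_
    have := (tendsto_zero_iff_norm_tendsto_zero.mp hs).const_mul r⁻¹
    simpa using this
  have goal2 : Tendsto (fun n => (A - (r : ℂ) • 1) (x n)) atTop (𝓝 0) := by
    simpa [sub_apply, smul_apply, one_apply] using hyT
  -- goal 1
  have hUy : Tendsto (fun n => U (A (x n) - (r : ℂ) • x n)) atTop (𝓝 0) := by
    simpa only [Function.comp_def, map_zero] using (U.continuous.tendsto 0).comp hyT
  have goal1 : Tendsto (fun n => (U - Complex.exp (θ * Complex.I) • 1) (x n)) atTop (𝓝 0) := by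
    have key : ∀ n, (U - Complex.exp (θ * Complex.I) • 1) (x n)
        = (r : ℂ)⁻¹ • ((T - Λ • 1) (x n) - U (A (x n) - (r : ℂ) • x n)) := by
      intro n
      have hT : T (x n) = U (A (x n)) := by
        conv_lhs => rw [hpolar]
        simp [mul_apply]
      simp only [sub_apply, smul_apply, one_apply, map_sub, map_smul, hT, hΛdef]
      match_scalars <;> (field_simp; try ring)
    have := (h₁.sub hUy).const_smul ((r : ℂ)⁻¹)
    simp only [sub_zero, smul_zero] at this
    exact this.congr fun n => (key n).symm
  refine ⟨goal1, goal2, ?_⟩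
  -- powers
  have hpow : ∀ k : ℕ, Tendsto (fun n => (A ^ k) (x n) - ((r : ℂ) ^ k) • x n) atTop (𝓝 0) := by
    intro k
    induction k with
    | zero =>
      have : (fun n => (A ^ 0) (x n) - ((r : ℂ) ^ 0) • x n) = fun _ => (0 : H) := by
        funext n
        simp only [pow_zero, ContinuousLinearMap.one_apply, one_smul, sub_self]
      rw [this]
      exact tendsto_const_nhds
    | succ k ih =>
      have key : ∀ n, (A ^ (k + 1)) (x n) - ((r : ℂ) ^ (k + 1)) • x n
          = A ((A ^ k) (x n) - ((r : ℂ) ^ k) • x n)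
            + ((r : ℂ) ^ k) • (A (x n) - (r : ℂ) • x n) := by
        intro n
        have : (A ^ (k + 1)) (x n) = A ((A ^ k) (x n)) := by
          rw [pow_succ' A k, ContinuousLinearMap.mul_apply]
        rw [this, map_sub, map_smul, pow_succ]
        module
      have t1 : Tendsto (fun n => A ((A ^ k) (x n) - ((r : ℂ) ^ k) • x n)) atTop (𝓝 0) := by
        simpa only [Function.comp_def, map_zero] using (A.continuous.tendsto 0).comp ih
      have t2 := hyT.const_smul ((r : ℂ) ^ k)
      simp only [smul_zero] at t2
      have hsum := t1.add t2
      rw [add_zero] at hsum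
      exact hsum.congr fun n => (key n).symm
  -- polynomials
  have hpoly : ∀ p : Polynomial ℝ,
      Tendsto (fun n => (Polynomial.aeval A p) (x n) - ((p.eval r : ℝ) : ℂ) • x n) atTop (𝓝 0) := by
    intro p
    induction p using Polynomial.induction_on' with
    | add p q hp hq =>
      have key : ∀ n, (Polynomial.aeval A (p + q)) (x n) - (((p + q).eval r : ℝ) : ℂ) • x n
          = ((Polynomial.aeval A p) (x n) - ((p.eval r : ℝ) : ℂ) • x n)
            + ((Polynomial.aeval A q) (x n) - ((q.eval r : ℝ) : ℂ) • x n) := by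
        intro n
        simp only [map_add, add_apply, Polynomial.eval_add]
        push_cast
        module
      have hsum := hp.add hq
      rw [add_zero] at hsum
      exact hsum.congr fun n => (key n).symm
    | monomial k a =>
      have key : ∀ n, (Polynomial.aeval A (Polynomial.monomial k a)) (x n)
          - (((Polynomial.monomial k a).eval r : ℝ) : ℂ) • x n
          = ((a : ℂ)) • ((A ^ k) (x n) - ((r : ℂ) ^ k) • x n) := by
        intro n
        rw [Polynomial.aeval_monomial, Polynomial.eval_monomial,
          IsScalarTower.algebraMap_apply ℝ ℂ (H →L[ℂ] H), Algebra.algebraMap_eq_smul_one]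
        simp only [ContinuousLinearMap.mul_apply, smul_apply, ContinuousLinearMap.one_apply, Complex.coe_algebraMap]
        push_cast
        module
      have := (hpow k).const_smul ((a : ℂ))
      simp only [smul_zero] at this
      exact this.congr fun n => (key n).symm
  -- r ∈ [0, ‖A‖]
  have hrA : r ≤ ‖A‖ := by
    have hev : ∀ n, r ≤ ‖A‖ + ‖A (x n) - (r : ℂ) • x n‖ := by
      intro n
      have h1 : ‖(r : ℂ) • x n‖ = r := by
        simp [norm_smul, hx n, abs_of_pos hr]
      have h2 : ‖A (x n)‖ ≤ ‖A‖ := by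
        simpa [hx n] using A.le_opNorm (x n)
      have h4 := norm_add_le ((r : ℂ) • x n - A (x n)) (A (x n))
      rw [sub_add_cancel, norm_sub_rev, h1] at h4
      linarith
    have hlim : Tendsto (fun n => ‖A‖ + ‖A (x n) - (r : ℂ) • x n‖) atTop (𝓝 ‖A‖) := by
      have := (tendsto_zero_iff_norm_tendsto_zero.mp hyT).const_add ‖A‖
      simpa using this
    exact ge_of_tendsto' hlim hev
  have hspec : spectrum ℝ A ⊆ Set.Icc 0 ‖A‖ := by
    intro t ht
    refine ⟨spectrum_nonneg_of_nonneg hAnn ht, ?_⟩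
    have := spectrum.norm_le_norm_of_mem ht
    rw [Real.norm_eq_abs] at this
    exact (le_abs_self t).trans this
  -- final goal via Weierstrass
  rw [NormedAddCommGroup.tendsto_nhds_zero]
  intro ε hε
  obtain ⟨p, hp⟩ := exists_polynomial_near_continuousMap 0 ‖A‖
    ((ContinuousMap.mk f hf).restrict (Set.Icc 0 ‖A‖)) (ε / 3) (by linarith)
  have hp' : ∀ t ∈ Set.Icc (0 : ℝ) ‖A‖, |f t - p.eval t| < ε / 3 := by
    intro t ht
    have h2 := ContinuousMap.norm_coe_le_norm
      (p.toContinuousMapOn (Set.Icc 0 ‖A‖) - (ContinuousMap.mk f hf).restrict (Set.Icc 0 ‖A‖))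
      ⟨t, ht⟩
    have h3 : |p.eval t - f t| < ε / 3 := by
      simpa [Real.norm_eq_abs] using h2.trans_lt hp
    rwa [abs_sub_comm] at h3
  have hcont : ContinuousOn (fun t : ℝ => p.eval t) (spectrum ℝ A) :=
    (Polynomial.continuous p).continuousOn
  have hnorm1 : ‖cfc f A - Polynomial.aeval A p‖ ≤ ε / 3 := by
    rw [← cfc_polynomial p A hAsa, ← cfc_sub _ _ A hf.continuousOn hcont]
    refine norm_cfc_le (by linarith) fun t ht => ?_
    rw [Real.norm_eq_abs]
    exact (hp' t (hspec ht)).le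
  have hmid := NormedAddCommGroup.tendsto_nhds_zero.mp (hpoly p) (ε / 3) (by linarith)
  filter_upwards [hmid] with n hn
  have hdecomp : (cfc f A - (f r : ℂ) • 1) (x n)
      = (cfc f A - Polynomial.aeval A p) (x n)
        + ((Polynomial.aeval A p) (x n) - ((p.eval r : ℝ) : ℂ) • x n)
        + (((p.eval r - f r : ℝ)) : ℂ) • x n := by
    simp only [sub_apply, smul_apply, ContinuousLinearMap.one_apply]
    push_cast
    module
  have e1 : ‖(cfc f A - Polynomial.aeval A p) (x n)‖ ≤ ε / 3 := by
    have := (cfc f A - Polynomial.aeval A p).le_opNorm (x n)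
    rw [hx n, mul_one] at this
    exact this.trans hnorm1
  have e3 : ‖(((p.eval r - f r : ℝ)) : ℂ) • x n‖ < ε / 3 := by
    rw [norm_smul, hx n, mul_one, Complex.norm_real, Real.norm_eq_abs, abs_sub_comm]
    exact hp' r ⟨hr.le, hrA⟩
  calc ‖(cfc f A - (f r : ℂ) • 1) (x n)‖
      ≤ ‖(cfc f A - Polynomial.aeval A p) (x n)‖
        + ‖(Polynomial.aeval A p) (x n) - ((p.eval r : ℝ) : ℂ) • x n‖
        + ‖(((p.eval r - f r : ℝ)) : ℂ) • x n‖ := by rw [hdecomp]; exact norm_add₃_le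
    _ < ε := by linarith
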